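/- (Bounded difference of discounted state distributions) Let π and π_D be two policies on a finite MDP with dynamics T and discount γ ∈ (0,1), and let ρ_π^M and ρ_{π_D}^M be their discounted state visitation measures (each summing to 1/(1−γ)). If ε_π = D_TV(π ‖ π_D), then ‖ρ_π^M − ρ_{π_D}^M‖₁ ≤ 2γ ε_π/(1−γ)². -/
import Mathlib


open Finset

private lemma aux_l1_mulVec {S : Type*} [Fintype S] (M : Matrix S S ℝ) (w : S → ℝ) :
    ∑ s', |M.mulVec w s'| ≤ ∑ s, (∑ s', |M s' s|) * |w s| := by
  calc ∑ s', |M.mulVec w s'| ≤ ∑ s', ∑ s, |M s' s * w s| := by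
        refine Finset.sum_le_sum fun s' _ => ?_
        simpa [Matrix.mulVec, dotProduct] using
          Finset.abs_sum_le_sum_abs (fun s => M s' s * w s) Finset.univ
    _ = ∑ s, (∑ s', |M s' s|) * |w s| := by
        rw [Finset.sum_comm]
        simp [abs_mul, Finset.sum_mul]

private lemma aux_stoch_mulVec {S : Type*} [Fintype S] {M : Matrix S S ℝ}
    (hM0 : ∀ s' s, 0 ≤ M s' s) (hM1 : ∀ s, ∑ s', M s' s = 1)
    {w : S → ℝ} (hw : ∀ s, 0 ≤ w s) :
    (∀ s', 0 ≤ M.mulVec w s') ∧ ∑ s', M.mulVec w s' = ∑ s, w s := by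
  constructor
  · intro s'
    exact Finset.sum_nonneg fun s _ => mul_nonneg (hM0 s' s) (hw s)
  · simp only [Matrix.mulVec, dotProduct]
    rw [Finset.sum_comm]
    simp [← Finset.sum_mul, hM1]

private lemma aux_pow_mulVec {S : Type*} [Fintype S] [DecidableEq S] {M : Matrix S S ℝ}
    (hM0 : ∀ s' s, 0 ≤ M s' s) (hM1 : ∀ s, ∑ s', M s' s = 1)
    {w : S → ℝ} (hw : ∀ s, 0 ≤ w s) (t : ℕ) :
    (∀ s', 0 ≤ (M ^ t).mulVec w s') ∧ ∑ s', (M ^ t).mulVec w s' = ∑ s, w s := by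
  induction t with
  | zero => simpa using hw
  | succ n ih =>
    have h : (M ^ (n+1)).mulVec w = M.mulVec ((M ^ n).mulVec w) := by
      rw [pow_succ', ← Matrix.mulVec_mulVec]
    rw [h]
    have := aux_stoch_mulVec hM0 hM1 ih.1
    exact ⟨this.1, this.2.trans ih.2⟩

private lemma aux_diff_bound {S : Type*} [Fintype S] [DecidableEq S]
    {P PD : Matrix S S ℝ}
    (hP0 : ∀ s' s, 0 ≤ P s' s) (hP1 : ∀ s, ∑ s', P s' s = 1)
    (hD0 : ∀ s' s, 0 ≤ PD s' s) (hD1 : ∀ s, ∑ s', PD s' s = 1)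
    {ρ0 : S → ℝ} (hρ0 : ∀ s, 0 ≤ ρ0 s) (hρs : ∑ s, ρ0 s = 1)
    {C : ℝ} (hC : ∀ s, ∑ s', |P s' s - PD s' s| ≤ C) (t : ℕ) :
    ∑ s', |(P ^ t).mulVec ρ0 s' - (PD ^ t).mulVec ρ0 s'| ≤ t * C := by
  induction t with
  | zero => simp
  | succ n ih =>
    have hne : Nonempty S := by
      by_contra h
      rw [not_nonempty_iff] at h
      rw [Finset.univ_eq_empty] at hρs
      simp at hρs
    have hC0 : 0 ≤ C :=
      le_trans (Finset.sum_nonneg fun _ _ => abs_nonneg _) (hC (Classical.arbitrary S))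
    set w : S → ℝ := (P ^ n).mulVec ρ0 with hw
    set wD : S → ℝ := (PD ^ n).mulVec ρ0 with hwD
    have hwDp := aux_pow_mulVec hD0 hD1 hρ0 n
    have hrw : ∀ s', (P ^ (n+1)).mulVec ρ0 s' - (PD ^ (n+1)).mulVec ρ0 s'
        = P.mulVec (w - wD) s' + (P - PD).mulVec wD s' := by
      intro s'
      have h1 : (P ^ (n+1)).mulVec ρ0 = P.mulVec w := by
        rw [hw, pow_succ', ← Matrix.mulVec_mulVec]
      have h2 : (PD ^ (n+1)).mulVec ρ0 = PD.mulVec wD := by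
        rw [hwD, pow_succ', ← Matrix.mulVec_mulVec]
      rw [h1, h2, Matrix.mulVec_sub, Matrix.sub_mulVec]
      simp [Pi.sub_apply]
    calc ∑ s', |(P ^ (n+1)).mulVec ρ0 s' - (PD ^ (n+1)).mulVec ρ0 s'|
        ≤ ∑ s', (|P.mulVec (w - wD) s'| + |(P - PD).mulVec wD s'|) := by
          refine Finset.sum_le_sum fun s' _ => ?_
          rw [hrw s']; exact abs_add_le _ _
      _ = ∑ s', |P.mulVec (w - wD) s'| + ∑ s', |(P - PD).mulVec wD s'| :=
          Finset.sum_add_distrib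
      _ ≤ ∑ s, (∑ s', |P s' s|) * |(w - wD) s| + ∑ s, (∑ s', |(P - PD) s' s|) * |wD s| :=
          add_le_add (aux_l1_mulVec P (w - wD)) (aux_l1_mulVec (P - PD) wD)
      _ ≤ n * C + C := by
          refine add_le_add ?_ ?_
          · have : ∀ s, (∑ s', |P s' s|) * |(w - wD) s| = |w s - wD s| := by
              intro s
              have : ∑ s', |P s' s| = 1 := by
                rw [← hP1 s]; exact Finset.sum_congr rfl fun s' _ => abs_of_nonneg (hP0 s' s)
              simp [this, Pi.sub_apply]
            rw [Finset.sum_congr rfl fun s _ => this s]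
            exact ih
          · calc ∑ s, (∑ s', |(P - PD) s' s|) * |wD s| ≤ ∑ s, C * |wD s| := by
                  refine Finset.sum_le_sum fun s _ => ?_
                  refine mul_le_mul_of_nonneg_right ?_ (abs_nonneg _)
                  simpa [Matrix.sub_apply] using hC s
              _ = C := by
                  rw [← Finset.mul_sum]
                  have : ∑ s, |wD s| = 1 := by
                    rw [← hρs, ← hwDp.2]
                    exact Finset.sum_congr rfl fun s _ => abs_of_nonneg (hwDp.1 s)
                  rw [this, mul_one]
      _ = (n + 1 : ℕ) * C := by push_cast; ring

set_option maxHeartbeats 1000000 in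
/-- Bounded difference of discounted state distributions: if ε_π bounds
D_TV(π(·|s) ‖ π_D(·|s)) for every state s, then the discounted visitation measures
satisfy ‖ρ_π^M − ρ_{π_D}^M‖₁ ≤ 2γ ε_π/(1−γ)². -/
theorem stmt_14 {S A : Type*} [Fintype S] [DecidableEq S] [Fintype A]
    (T : S → A → S → ℝ) (π πD : S → A → ℝ) (ρ0 : S → ℝ) (γ επ : ℝ)
    (hγ : γ ∈ Set.Ioo (0:ℝ) 1)
    (hT : ∀ s a, (∀ s', 0 ≤ T s a s') ∧ ∑ s', T s a s' = 1)
    (hπ : ∀ s, (∀ a, 0 ≤ π s a) ∧ ∑ a, π s a = 1)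
    (hπD : ∀ s, (∀ a, 0 ≤ πD s a) ∧ ∑ a, πD s a = 1)
    (hρ0_nonneg : ∀ s, 0 ≤ ρ0 s) (hρ0_sum : ∑ s, ρ0 s = 1)
    (hεπ : ∀ s, (1/2) * ∑ a, |π s a - πD s a| ≤ επ) :
    let P : Matrix S S ℝ := Matrix.of fun s' s => ∑ a, π s a * T s a s'
    let PD : Matrix S S ℝ := Matrix.of fun s' s => ∑ a, πD s a * T s a s'
    let ρπ : S → ℝ := fun s => ∑' t : ℕ, γ ^ t * (P ^ t).mulVec ρ0 s
    let ρπD : S → ℝ := fun s => ∑' t : ℕ, γ ^ t * (PD ^ t).mulVec ρ0 s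
    ∑ s, |ρπ s - ρπD s| ≤ 2 * γ * επ / (1 - γ) ^ 2 := by
  intro P PD ρπ ρπD
  obtain ⟨hγ0, hγ1⟩ := hγ
  have hγn : ‖γ‖ < 1 := by rw [Real.norm_eq_abs, abs_of_pos hγ0]; exact hγ1
  have hne : Nonempty S := by
    by_contra h
    rw [not_nonempty_iff] at h
    rw [Finset.univ_eq_empty] at hρ0_sum
    simp at hρ0_sum
  -- stochasticity of P and PD
  have hP0 : ∀ s' s, 0 ≤ P s' s := fun s' s =>
    Finset.sum_nonneg fun a _ => mul_nonneg ((hπ s).1 a) ((hT s a).1 s')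
  have hD0 : ∀ s' s, 0 ≤ PD s' s := fun s' s =>
    Finset.sum_nonneg fun a _ => mul_nonneg ((hπD s).1 a) ((hT s a).1 s')
  have hP1 : ∀ s, ∑ s', P s' s = 1 := by
    intro s
    show ∑ s', ∑ a, π s a * T s a s' = 1
    rw [Finset.sum_comm]
    simp only [← Finset.mul_sum]
    calc ∑ a, π s a * ∑ s', T s a s' = ∑ a, π s a := by
          refine Finset.sum_congr rfl fun a _ => ?_
          rw [(hT s a).2, mul_one]
      _ = 1 := (hπ s).2
  have hD1 : ∀ s, ∑ s', PD s' s = 1 := by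
    intro s
    show ∑ s', ∑ a, πD s a * T s a s' = 1
    rw [Finset.sum_comm]
    simp only [← Finset.mul_sum]
    calc ∑ a, πD s a * ∑ s', T s a s' = ∑ a, πD s a := by
          refine Finset.sum_congr rfl fun a _ => ?_
          rw [(hT s a).2, mul_one]
      _ = 1 := (hπD s).2
  -- column L1 bound on P - PD
  have hC : ∀ s, ∑ s', |P s' s - PD s' s| ≤ 2 * επ := by
    intro s
    have h1 : ∀ s', |P s' s - PD s' s| ≤ ∑ a, |π s a - πD s a| * T s a s' := by
      intro s'
      have : P s' s - PD s' s = ∑ a, (π s a - πD s a) * T s a s' := by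
        show (∑ a, π s a * T s a s') - (∑ a, πD s a * T s a s') = _
        rw [← Finset.sum_sub_distrib]
        exact Finset.sum_congr rfl fun a _ => by ring
      rw [this]
      refine le_trans (Finset.abs_sum_le_sum_abs _ _) ?_
      refine Finset.sum_le_sum fun a _ => ?_
      rw [abs_mul, abs_of_nonneg ((hT s a).1 s')]
    calc ∑ s', |P s' s - PD s' s| ≤ ∑ s', ∑ a, |π s a - πD s a| * T s a s' :=
          Finset.sum_le_sum fun s' _ => h1 s'
      _ = ∑ a, |π s a - πD s a| := by
          rw [Finset.sum_comm]
          simp only [← Finset.mul_sum]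
          refine Finset.sum_congr rfl fun a _ => ?_
          rw [(hT s a).2, mul_one]
      _ ≤ 2 * επ := by linarith [hεπ s]
  have hε0 : 0 ≤ επ := by
    obtain ⟨s⟩ := hne
    have := hεπ s
    have h2 : 0 ≤ ∑ a, |π s a - πD s a| := Finset.sum_nonneg fun _ _ => abs_nonneg _
    linarith
  -- entrywise bounds
  have hPent : ∀ t s, 0 ≤ (P ^ t).mulVec ρ0 s ∧ (P ^ t).mulVec ρ0 s ≤ 1 := by
    intro t s
    have h := aux_pow_mulVec hP0 hP1 hρ0_nonneg t
    refine ⟨h.1 s, ?_⟩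
    calc (P ^ t).mulVec ρ0 s ≤ ∑ s', (P ^ t).mulVec ρ0 s' :=
          Finset.single_le_sum (fun s' _ => h.1 s') (Finset.mem_univ s)
      _ = 1 := h.2.trans hρ0_sum
  have hDent : ∀ t s, 0 ≤ (PD ^ t).mulVec ρ0 s ∧ (PD ^ t).mulVec ρ0 s ≤ 1 := by
    intro t s
    have h := aux_pow_mulVec hD0 hD1 hρ0_nonneg t
    refine ⟨h.1 s, ?_⟩
    calc (PD ^ t).mulVec ρ0 s ≤ ∑ s', (PD ^ t).mulVec ρ0 s' :=
          Finset.single_le_sum (fun s' _ => h.1 s') (Finset.mem_univ s)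
      _ = 1 := h.2.trans hρ0_sum
  -- summability
  have hgeom : Summable fun t : ℕ => γ ^ t := summable_geometric_of_lt_one hγ0.le hγ1
  have hSumP : ∀ s, Summable fun t : ℕ => γ ^ t * (P ^ t).mulVec ρ0 s := by
    intro s
    refine Summable.of_nonneg_of_le (fun t => mul_nonneg (pow_nonneg hγ0.le t) (hPent t s).1)
      (fun t => ?_) hgeom
    calc γ ^ t * (P ^ t).mulVec ρ0 s ≤ γ ^ t * 1 :=
          mul_le_mul_of_nonneg_left (hPent t s).2 (pow_nonneg hγ0.le t)
      _ = γ ^ t := mul_one _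
  have hSumD : ∀ s, Summable fun t : ℕ => γ ^ t * (PD ^ t).mulVec ρ0 s := by
    intro s
    refine Summable.of_nonneg_of_le (fun t => mul_nonneg (pow_nonneg hγ0.le t) (hDent t s).1)
      (fun t => ?_) hgeom
    calc γ ^ t * (PD ^ t).mulVec ρ0 s ≤ γ ^ t * 1 :=
          mul_le_mul_of_nonneg_left (hDent t s).2 (pow_nonneg hγ0.le t)
      _ = γ ^ t := mul_one _
  set d : ℕ → S → ℝ := fun t s => (P ^ t).mulVec ρ0 s - (PD ^ t).mulVec ρ0 s with hd
  have hdabs : ∀ t s, |γ ^ t * d t s| ≤ 2 * γ ^ t := by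
    intro t s
    rw [abs_mul, abs_of_nonneg (pow_nonneg hγ0.le t)]
    have h1 := hPent t s
    have h2 := hDent t s
    have : |d t s| ≤ 2 := abs_le.mpr ⟨by simp only [hd]; linarith, by simp only [hd]; linarith⟩
    calc γ ^ t * |d t s| ≤ γ ^ t * 2 :=
          mul_le_mul_of_nonneg_left this (pow_nonneg hγ0.le t)
      _ = 2 * γ ^ t := by ring
  have hSumAbs : ∀ s, Summable fun t : ℕ => |γ ^ t * d t s| := by
    intro s
    exact Summable.of_nonneg_of_le (fun t => abs_nonneg _) (fun t => hdabs t s)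
      (hgeom.mul_left 2)
  have hdiff : ∀ s, ρπ s - ρπD s = ∑' t : ℕ, γ ^ t * d t s := by
    intro s
    rw [show (fun t : ℕ => γ ^ t * d t s)
        = fun t : ℕ => γ ^ t * (P ^ t).mulVec ρ0 s - γ ^ t * (PD ^ t).mulVec ρ0 s from
        funext fun t => by simp only [hd]; ring]
    exact (Summable.tsum_sub (hSumP s) (hSumD s)).symm
  -- the summable majorant
  have hmaj : Summable fun t : ℕ => γ ^ t * ((t : ℝ) * (2 * επ)) := by
    have h := summable_pow_mul_geometric_of_norm_lt_one 1 hγn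
    have h2 : Summable fun t : ℕ => (2 * επ) * ((t : ℝ) ^ 1 * γ ^ t) := h.mul_left _
    refine h2.congr fun t => by ring
  calc ∑ s, |ρπ s - ρπD s| = ∑ s, |∑' t : ℕ, γ ^ t * d t s| := by
        refine Finset.sum_congr rfl fun s _ => ?_
        rw [hdiff s]
    _ ≤ ∑ s, ∑' t : ℕ, |γ ^ t * d t s| := by
        refine Finset.sum_le_sum fun s _ => ?_
        have h := norm_tsum_le_tsum_norm (f := fun t : ℕ => γ ^ t * d t s)
          (by simp only [Real.norm_eq_abs]; exact hSumAbs s)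
        simp only [Real.norm_eq_abs] at h
        exact h
    _ = ∑' t : ℕ, ∑ s, |γ ^ t * d t s| := (Summable.tsum_finsetSum fun s _ => hSumAbs s).symm
    _ ≤ ∑' t : ℕ, γ ^ t * ((t : ℝ) * (2 * επ)) := by
        refine Summable.tsum_le_tsum (fun t => ?_) ?_ hmaj
        · have : ∑ s, |γ ^ t * d t s| = γ ^ t * ∑ s, |d t s| := by
            rw [Finset.mul_sum]
            refine Finset.sum_congr rfl fun s _ => ?_
            rw [abs_mul, abs_of_nonneg (pow_nonneg hγ0.le t)]
          rw [this]
          refine mul_le_mul_of_nonneg_left ?_ (pow_nonneg hγ0.le t)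
          exact aux_diff_bound hP0 hP1 hD0 hD1 hρ0_nonneg hρ0_sum hC t
        · refine Summable.of_nonneg_of_le
            (fun t => Finset.sum_nonneg fun _ _ => abs_nonneg _)
            (fun t => ?_) hmaj
          calc ∑ s, |γ ^ t * d t s| = γ ^ t * ∑ s, |d t s| := by
                rw [Finset.mul_sum]
                refine Finset.sum_congr rfl fun s _ => ?_
                rw [abs_mul, abs_of_nonneg (pow_nonneg hγ0.le t)]
            _ ≤ γ ^ t * ((t : ℝ) * (2 * επ)) :=
                mul_le_mul_of_nonneg_left
                  (aux_diff_bound hP0 hP1 hD0 hD1 hρ0_nonneg hρ0_sum hC t)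
                  (pow_nonneg hγ0.le t)
    _ = (2 * επ) * ∑' t : ℕ, (t : ℝ) * γ ^ t := by
        rw [← tsum_mul_left]
        refine tsum_congr fun t => by ring
    _ = (2 * επ) * (γ / (1 - γ) ^ 2) := by
        rw [tsum_coe_mul_geometric_of_norm_lt_one hγn]
    _ = 2 * γ * επ / (1 - γ) ^ 2 := by ring
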